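/- Let h : X × Y → E be a measurable kernel with values in a type 2 Banach space E, bounded by M (‖h(x,y)‖ ≤ M), and degenerate in the sense that E[h(X, y)] = 0 for all y and E[h(x, Y)] = 0 for all x, where X_1,…,X_m are i.i.d. copies of X, Y_1,…,Y_n are i.i.d. copies of Y, and the two samples are independent. Then the two-sample U-statistic R = (mn)⁻¹ ∑_{i=1}^m ∑_{j=1}^n h(X_i, Y_j) satisfies E‖R‖² ≤ b² M² / (mn), where b is the type 2 constant of E. -/

import Mathlib

open MeasureTheory ProbabilityTheory

/-!
Conditionally on the second sample `y`, the functions `x ↦ ∑ⱼ h x (y j)` are centred by the first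
degeneracy condition, so the type 2 inequality over the first sample bounds
`E‖∑ᵢ ∑ⱼ h(Xᵢ, yⱼ)‖²` by `b m E‖∑ⱼ h(X, yⱼ)‖²`. For each fixed `x` the function `h x` is centred
by the second condition, and the type 2 inequality over the second sample bounds
`E‖∑ⱼ h(x, Yⱼ)‖²` by `b n M²`. Independence identifies the joint law of the two samples with a
product of product measures, on which Fubini combines the two bounds into `b² m n M²`.
-/

def HasType2Constant (E : Type) [NormedAddCommGroup E] [NormedSpace ℝ E] [MeasurableSpace E]
    (b : ℝ) : Prop :=
  ∀ (Ω' : Type) (_ : MeasurableSpace Ω') (μ' : Measure Ω'),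
    IsProbabilityMeasure μ' → ∀ (k : ℕ) (U : Fin k → Ω' → E),
    iIndepFun U μ' →
    (∀ i, Measurable (U i)) →
    (∀ i, MemLp (U i) 2 μ') →
    (∀ i, ∫ ω, U i ω ∂μ' = 0) →
    ∫ ω, ‖∑ i, U i ω‖ ^ 2 ∂μ' ≤ b * ∑ i, ∫ ω, ‖U i ω‖ ^ 2 ∂μ'

theorem memLp_uncurry_comp_of_norm_le {α 𝒳 𝒴 E : Type*} [MeasurableSpace α] [MeasurableSpace 𝒳]
    [MeasurableSpace 𝒴] [NormedAddCommGroup E] {ν : Measure α} [IsFiniteMeasure ν]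
    {h : 𝒳 → 𝒴 → E} (hmeas : StronglyMeasurable (Function.uncurry h)) {M : ℝ}
    (hbound : ∀ x y, ‖h x y‖ ≤ M) {f : α → 𝒳} {g : α → 𝒴} (hf : Measurable f)
    (hg : Measurable g) (p : ENNReal) :
    MemLp (fun a => h (f a) (g a)) p ν :=
  .of_bound (hmeas.comp_measurable (hf.prodMk hg)).aestronglyMeasurable M
    (ae_of_all _ fun _ => hbound _ _)

theorem map_samples_eq_prod_pi {Ω 𝒳 𝒴 : Type*} [MeasurableSpace Ω] [MeasurableSpace 𝒳]
    [MeasurableSpace 𝒴] {μ : Measure Ω} [IsProbabilityMeasure μ] {m n : ℕ}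
    {X : Fin m → Ω → 𝒳} {Y : Fin n → Ω → 𝒴} (hXmeas : ∀ i, Measurable (X i))
    (hYmeas : ∀ j, Measurable (Y j)) {PX : Measure 𝒳} {PY : Measure 𝒴}
    (hX : ∀ i, μ.map (X i) = PX) (hY : ∀ j, μ.map (Y j) = PY) (hXindep : iIndepFun X μ)
    (hYindep : iIndepFun Y μ) (hXY : IndepFun (fun ω i => X i ω) (fun ω j => Y j ω) μ) :
    μ.map (fun ω => ((fun i => X i ω, fun j => Y j ω) : (Fin m → 𝒳) × (Fin n → 𝒴)))
      = (Measure.pi fun _ : Fin m => PX).prod (Measure.pi fun _ : Fin n => PY) := by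
  rw [hXY.map_prod_eq_prod_map_map (measurable_pi_lambda _ hXmeas).aemeasurable
    (measurable_pi_lambda _ hYmeas).aemeasurable,
    hXindep.map_fun_eq_pi_map fun i => (hXmeas i).aemeasurable,
    hYindep.map_fun_eq_pi_map fun j => (hYmeas j).aemeasurable]
  simp_rw [hX, hY]

namespace HasType2Constant

variable {E : Type} [NormedAddCommGroup E] [NormedSpace ℝ E] [MeasurableSpace E] {b : ℝ}

theorem integral_norm_sum_sq_pi_le (hE : HasType2Constant E b) {β : Type} [MeasurableSpace β]
    (P : Measure β) [IsProbabilityMeasure P] (k : ℕ) {φ : β → E} (hφ : Measurable φ)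
    (hφ2 : MemLp φ 2 P) (hmean : ∫ x, φ x ∂P = 0) :
    ∫ x, ‖∑ j, φ (x j)‖ ^ 2 ∂(Measure.pi fun _ : Fin k => P) ≤ b * k * ∫ x, ‖φ x‖ ^ 2 ∂P := by
  have hsq : ∀ j : Fin k, ∫ x, ‖φ (x j)‖ ^ 2 ∂(Measure.pi fun _ : Fin k => P)
      = ∫ x, ‖φ x‖ ^ 2 ∂P :=
    fun j => integral_comp_eval (μ := fun _ : Fin k => P) (hφ2.1.norm.pow 2)
  calc ∫ x, ‖∑ j, φ (x j)‖ ^ 2 ∂(Measure.pi fun _ : Fin k => P)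
      ≤ b * ∑ j : Fin k, ∫ x, ‖φ (x j)‖ ^ 2 ∂(Measure.pi fun _ : Fin k => P) :=
        hE (Fin k → β) _ _ inferInstance k (fun j x => φ (x j))
          (iIndepFun_pi fun _ => hφ.aemeasurable)
          (fun j => hφ.comp (measurable_pi_apply j))
          (fun j => hφ2.comp_measurePreserving (measurePreserving_eval _ j))
          (fun j => (integral_comp_eval hφ2.1).trans hmean)
    _ = b * k * ∫ x, ‖φ x‖ ^ 2 ∂P := by
        simp only [hsq, Finset.sum_const, Finset.card_univ, Fintype.card_fin, nsmul_eq_mul]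
        ring

theorem integral_norm_sum_sq_pi_le_of_norm_le [BorelSpace E] (hE : HasType2Constant E b)
    (hb : 0 ≤ b) {β : Type} [MeasurableSpace β] (P : Measure β) [IsProbabilityMeasure P] (k : ℕ)
    {φ : β → E} (hφ : StronglyMeasurable φ) {C : ℝ} (hC : ∀ x, ‖φ x‖ ≤ C)
    (hmean : ∫ x, φ x ∂P = 0) :
    ∫ x, ‖∑ j, φ (x j)‖ ^ 2 ∂(Measure.pi fun _ : Fin k => P) ≤ b * k * C ^ 2 := by
  have hsq : ∫ x, ‖φ x‖ ^ 2 ∂P ≤ C ^ 2 :=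
    calc ∫ x, ‖φ x‖ ^ 2 ∂P ≤ ∫ _, C ^ 2 ∂P :=
          integral_mono_of_nonneg (ae_of_all _ fun _ => by positivity) (integrable_const _)
            (ae_of_all _ fun x => pow_le_pow_left₀ (norm_nonneg _) (hC x) 2)
      _ = C ^ 2 := by simp
  exact (hE.integral_norm_sum_sq_pi_le P k hφ.measurable
      (.of_bound hφ.aestronglyMeasurable C (ae_of_all _ hC)) hmean).trans
    (mul_le_mul_of_nonneg_left hsq (by positivity))

theorem integral_norm_double_sum_sq_le [BorelSpace E] (hE : HasType2Constant E b) (hb : 0 ≤ b)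
    {𝒳 𝒴 : Type} [MeasurableSpace 𝒳] [MeasurableSpace 𝒴] (PX : Measure 𝒳) (PY : Measure 𝒴)
    [IsProbabilityMeasure PX] [IsProbabilityMeasure PY] (m n : ℕ) {h : 𝒳 → 𝒴 → E}
    (hmeas : StronglyMeasurable (Function.uncurry h)) {M : ℝ} (hbound : ∀ x y, ‖h x y‖ ≤ M)
    (hdeg1 : ∀ y, ∫ x, h x y ∂PX = 0) (hdeg2 : ∀ x, ∫ y, h x y ∂PY = 0) :
    ∫ p, ‖∑ i, ∑ j, h (p.1 i) (p.2 j)‖ ^ 2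
        ∂((Measure.pi fun _ : Fin m => PX).prod (Measure.pi fun _ : Fin n => PY))
      ≤ b ^ 2 * m * n * M ^ 2 := by
  set πX := Measure.pi fun _ : Fin m => PX
  set πY := Measure.pi fun _ : Fin n => PY
  have hint_inner : Integrable (fun q : 𝒳 × (Fin n → 𝒴) => ‖∑ j, h q.1 (q.2 j)‖ ^ 2) (PX.prod πY) :=
    (memLp_finsetSum _ fun j _ => memLp_uncurry_comp_of_norm_le hmeas hbound measurable_fst
      ((measurable_pi_apply j).comp measurable_snd) 2).integrable_norm_pow two_ne_zero
  have hint_double : Integrable (fun p : (Fin m → 𝒳) × (Fin n → 𝒴) => ‖∑ i, ∑ j, h (p.1 i) (p.2 j)‖ ^ 2)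
      (πX.prod πY) :=
    (memLp_finsetSum _ fun i _ => memLp_finsetSum _ fun j _ =>
      memLp_uncurry_comp_of_norm_le hmeas hbound ((measurable_pi_apply i).comp measurable_fst)
        ((measurable_pi_apply j).comp measurable_snd) 2).integrable_norm_pow two_ne_zero
  have hgiven_y : ∀ y : Fin n → 𝒴, ∫ x, ‖∑ i, ∑ j, h (x i) (y j)‖ ^ 2 ∂πX
      ≤ b * m * ∫ x', ‖∑ j, h x' (y j)‖ ^ 2 ∂PX := by
    intro y
    have hφ : ∀ j, MemLp (fun x' => h x' (y j)) 2 PX := fun j =>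
      memLp_uncurry_comp_of_norm_le hmeas hbound measurable_id measurable_const 2
    refine hE.integral_norm_sum_sq_pi_le PX m (φ := fun x' => ∑ j, h x' (y j))
      (Finset.stronglyMeasurable_fun_sum _ fun j _ =>
        hmeas.comp_measurable measurable_prodMk_right).measurable
      (memLp_finsetSum _ fun j _ => hφ j) ?_
    rw [integral_finsetSum _ fun j _ => (hφ j).integrable one_le_two]
    exact Finset.sum_eq_zero fun j _ => hdeg1 (y j)
  have hgiven_x : ∀ x', ∫ y, ‖∑ j, h x' (y j)‖ ^ 2 ∂πY ≤ b * n * M ^ 2 := fun x' =>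
    hE.integral_norm_sum_sq_pi_le_of_norm_le hb PY n
      (hmeas.comp_measurable measurable_prodMk_left) (hbound x') (hdeg2 x')
  calc ∫ p, ‖∑ i, ∑ j, h (p.1 i) (p.2 j)‖ ^ 2 ∂(πX.prod πY)
      = ∫ y, ∫ x, ‖∑ i, ∑ j, h (x i) (y j)‖ ^ 2 ∂πX ∂πY := integral_prod_symm _ hint_double
    _ ≤ ∫ y, b * m * ∫ x', ‖∑ j, h x' (y j)‖ ^ 2 ∂PX ∂πY :=
        integral_mono hint_double.integral_prod_right (hint_inner.integral_prod_right.const_mul _) hgiven_y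
    _ = b * m * ∫ x', ∫ y, ‖∑ j, h x' (y j)‖ ^ 2 ∂πY ∂PX := by
        rw [integral_const_mul, ← integral_prod_symm _ hint_inner, integral_prod _ hint_inner]
    _ ≤ b * m * ∫ _, b * n * M ^ 2 ∂PX :=
        mul_le_mul_of_nonneg_left
          (integral_mono hint_inner.integral_prod_left (integrable_const _) hgiven_x) (by positivity)
    _ = b ^ 2 * m * n * M ^ 2 := by
        simp only [integral_const, probReal_univ, one_smul]
        ring

end HasType2Constant

theorem degenerate_two_sample_U_statistic_bound_general
    {𝒳 𝒴 E : Type} [MeasurableSpace 𝒳] [MeasurableSpace 𝒴]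
    [NormedAddCommGroup E] [NormedSpace ℝ E]
    [MeasurableSpace E] [BorelSpace E]
    {Ω : Type} [MeasurableSpace Ω] (μ : Measure Ω) [IsProbabilityMeasure μ]
    (b M : ℝ) (hb : 0 < b)
    -- `E` is a type 2 Banach space with constant `b`:
    (hType2 : ∀ (Ω' : Type) (_ : MeasurableSpace Ω') (μ' : Measure Ω'),
      IsProbabilityMeasure μ' → ∀ (k : ℕ) (U : Fin k → Ω' → E),
      iIndepFun U μ' →
      (∀ i, Measurable (U i)) →
      (∀ i, MemLp (U i) 2 μ') →
      (∀ i, ∫ ω, U i ω ∂μ' = 0) →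
      ∫ ω, ‖∑ i, U i ω‖ ^ 2 ∂μ' ≤ b * ∑ i, ∫ ω, ‖U i ω‖ ^ 2 ∂μ')
    (m n : ℕ)
    (X : Fin m → Ω → 𝒳) (Y : Fin n → Ω → 𝒴)
    (hXmeas : ∀ i, Measurable (X i)) (hYmeas : ∀ j, Measurable (Y j))
    (PX : Measure 𝒳) (PY : Measure 𝒴)
    [IsProbabilityMeasure PX] [IsProbabilityMeasure PY]
    -- the `X_i`'s are i.i.d. with law `PX`, the `Y_j`'s i.i.d. with law `PY`,
    -- and the two samples are independent:
    (hX : ∀ i, Measure.map (X i) μ = PX) (hY : ∀ j, Measure.map (Y j) μ = PY)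
    (hXindep : iIndepFun X μ)
    (hYindep : iIndepFun Y μ)
    (hXY : IndepFun (fun ω i => X i ω) (fun ω j => Y j ω) μ)
    (h : 𝒳 → 𝒴 → E)
    (hmeas : StronglyMeasurable (Function.uncurry h))
    (hbound : ∀ x y, ‖h x y‖ ≤ M)
    -- degeneracy of the kernel:
    (hdeg1 : ∀ y, ∫ x, h x y ∂PX = 0) (hdeg2 : ∀ x, ∫ y, h x y ∂PY = 0) :
    ∫ ω, ‖(m * n : ℝ)⁻¹ • ∑ i, ∑ j, h (X i ω) (Y j ω)‖ ^ 2 ∂μ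
      ≤ b ^ 2 * M ^ 2 / (m * n) := by
  set S : Ω → (Fin m → 𝒳) × (Fin n → 𝒴) := fun ω => (fun i => X i ω, fun j => Y j ω)
  have hS : Measurable S := (measurable_pi_lambda _ hXmeas).prodMk (measurable_pi_lambda _ hYmeas)
  have hU : StronglyMeasurable fun p : (Fin m → 𝒳) × (Fin n → 𝒴) => ∑ i, ∑ j, h (p.1 i) (p.2 j) :=
    Finset.stronglyMeasurable_fun_sum _ fun i _ => Finset.stronglyMeasurable_fun_sum _ fun j _ =>
      hmeas.comp_measurable (g := fun p : (Fin m → 𝒳) × (Fin n → 𝒴) => (p.1 i, p.2 j))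
        (by fun_prop)
  have hsum : ∫ ω, ‖∑ i, ∑ j, h (X i ω) (Y j ω)‖ ^ 2 ∂μ ≤ b ^ 2 * m * n * M ^ 2 :=
    calc ∫ ω, ‖∑ i, ∑ j, h (X i ω) (Y j ω)‖ ^ 2 ∂μ
        = ∫ p, ‖∑ i, ∑ j, h (p.1 i) (p.2 j)‖ ^ 2 ∂(μ.map S) :=
          (integral_map hS.aemeasurable (hU.norm.pow 2).aestronglyMeasurable).symm
      _ ≤ b ^ 2 * m * n * M ^ 2 :=
          map_samples_eq_prod_pi hXmeas hYmeas hX hY hXindep hYindep hXY ▸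
            HasType2Constant.integral_norm_double_sum_sq_le hType2 hb.le PX PY m n hmeas hbound
              hdeg1 hdeg2
  calc ∫ ω, ‖(m * n : ℝ)⁻¹ • ∑ i, ∑ j, h (X i ω) (Y j ω)‖ ^ 2 ∂μ
      = ((m : ℝ) * n)⁻¹ ^ 2 * ∫ ω, ‖∑ i, ∑ j, h (X i ω) (Y j ω)‖ ^ 2 ∂μ := by
        simp_rw [norm_smul, mul_pow, integral_const_mul, Real.norm_eq_abs, sq_abs]
    _ ≤ ((m : ℝ) * n)⁻¹ ^ 2 * (b ^ 2 * m * n * M ^ 2) := by gcongr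
    _ = b ^ 2 * M ^ 2 / (m * n) := by
        rcases eq_or_ne ((m : ℝ) * n) 0 with hmn | hmn
        · simp [hmn]
        · field_simp

/-- Bound for a degenerate bounded two-sample U-statistic with values in a type 2
Banach space: `E‖R‖² ≤ b² M² / (mn)`. -/
theorem degenerate_two_sample_U_statistic_bound
    {𝒳 𝒴 E : Type} [MeasurableSpace 𝒳] [MeasurableSpace 𝒴]
    [NormedAddCommGroup E] [NormedSpace ℝ E] [CompleteSpace E]
    [MeasurableSpace E] [BorelSpace E] [SecondCountableTopology E]
    {Ω : Type} [MeasurableSpace Ω] (μ : Measure Ω) [IsProbabilityMeasure μ]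
    (b M : ℝ) (hb : 0 < b)
    -- `E` is a type 2 Banach space with constant `b`:
    (hType2 : ∀ (Ω' : Type) (_ : MeasurableSpace Ω') (μ' : Measure Ω'),
      IsProbabilityMeasure μ' → ∀ (k : ℕ) (U : Fin k → Ω' → E),
      iIndepFun U μ' →
      (∀ i, Measurable (U i)) →
      (∀ i, MemLp (U i) 2 μ') →
      (∀ i, ∫ ω, U i ω ∂μ' = 0) →
      ∫ ω, ‖∑ i, U i ω‖ ^ 2 ∂μ' ≤ b * ∑ i, ∫ ω, ‖U i ω‖ ^ 2 ∂μ')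
    (m n : ℕ) (hm : 0 < m) (hn : 0 < n)
    (X : Fin m → Ω → 𝒳) (Y : Fin n → Ω → 𝒴)
    (hXmeas : ∀ i, Measurable (X i)) (hYmeas : ∀ j, Measurable (Y j))
    (PX : Measure 𝒳) (PY : Measure 𝒴)
    [IsProbabilityMeasure PX] [IsProbabilityMeasure PY]
    -- the `X_i`'s are i.i.d. with law `PX`, the `Y_j`'s i.i.d. with law `PY`,
    -- and the two samples are independent:
    (hX : ∀ i, Measure.map (X i) μ = PX) (hY : ∀ j, Measure.map (Y j) μ = PY)
    (hXindep : iIndepFun X μ)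
    (hYindep : iIndepFun Y μ)
    (hXY : IndepFun (fun ω i => X i ω) (fun ω j => Y j ω) μ)
    (h : 𝒳 → 𝒴 → E)
    (hmeas : StronglyMeasurable (Function.uncurry h))
    (hbound : ∀ x y, ‖h x y‖ ≤ M)
    -- degeneracy of the kernel:
    (hdeg1 : ∀ y, ∫ x, h x y ∂PX = 0) (hdeg2 : ∀ x, ∫ y, h x y ∂PY = 0) :
    ∫ ω, ‖(m * n : ℝ)⁻¹ • ∑ i, ∑ j, h (X i ω) (Y j ω)‖ ^ 2 ∂μ
      ≤ b ^ 2 * M ^ 2 / (m * n) :=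
  degenerate_two_sample_U_statistic_bound_general μ b M hb hType2 m n X Y hXmeas hYmeas PX PY hX hY
    hXindep hYindep hXY h hmeas hbound hdeg1 hdeg2
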